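/- With T^{p,q}_{m,n} := (1/n)·(−1)^{(p−1)(m−p−q)}·Y_{p−1,q}·Σ_{s=1}^{n} N_{p−1,s−1}·N_{q,n−s}, for odd p > 1 and even q > 0 one has T^{p,q}_{m,n} = (−1)^m · T^{p−1,q}_{m,n} + T^{p,q−1}_{m,n}. -/
import Mathlib

/-- The permutation (as a ranking function) associated to a choice `c` of one
column in each of the `k` rows of a `k × l` matrix: `σ_c i` is the number of
indices `m` with `c m < c i`, or `c m = c i` and `m ≤ i`. -/
def sigmaC {k l : ℕ} (c : Fin k → Fin l) (i : Fin k) : ℕ :=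
  (Finset.univ.filter (fun m => c m < c i ∨ (c m = c i ∧ m ≤ i))).card

/-- The sign of `σ_c`, computed as the parity of its number of inversions. -/
def sgnC {k l : ℕ} (c : Fin k → Fin l) : ℤ :=
  (-1) ^ ((Finset.univ.filter
    (fun p : Fin k × Fin k => p.1 < p.2 ∧ sigmaC c p.2 < sigmaC c p.1)).card)

/-- `N k l`: the signed count of ways to choose one entry in each row of a
`k × l` matrix. -/
def N (k l : ℕ) : ℤ := ∑ c : Fin k → Fin l, sgnC c

/-- `Y p q = binom(⌊(p+q)/2⌋, ⌊p/2⌋)` if `p` or `q` is even, and `0` otherwise. -/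
def Y (p q : ℕ) : ℤ :=
  if Even p ∨ Even q then (((p + q) / 2).choose (p / 2) : ℤ) else 0

/-- `T^{p,q}_{m,n} = (1/n)·(−1)^{(p−1)(m−p−q)}·Y_{p−1,q}·Σ_{s=1}^{n} N_{p−1,s−1}·N_{q,n−s}`. -/
def T (m n p q : ℕ) : ℚ :=
  (1 / (n : ℚ)) * (-1 : ℚ) ^ (((p : ℤ) - 1) * ((m : ℤ) - (p : ℤ) - (q : ℤ))) *
    ((Y (p - 1) q : ℚ)) *
    ∑ s ∈ Finset.Icc 1 n, (N (p - 1) (s - 1) : ℚ) * (N q (n - s) : ℚ)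

open Finset

lemma sigmaC_lt_of_lt {k l : ℕ} {c : Fin k → Fin l} {i j : Fin k} (h : c j < c i) :
    sigmaC c j < sigmaC c i := by
  apply Finset.card_lt_card
  rw [Finset.ssubset_iff_of_subset]
  · exact ⟨i, by simp, by simp [h.ne', not_lt.2 h.le, h.ne]⟩
  · intro m hm
    simp only [mem_filter, mem_univ, true_and] at hm ⊢
    rcases hm with h1 | ⟨h1, h2⟩
    · exact Or.inl (h1.trans h)
    · exact Or.inl (h1 ▸ h)

lemma sigmaC_lt_of_eq {k l : ℕ} {c : Fin k → Fin l} {i j : Fin k} (hc : c i = c j) (hij : i < j) :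
    sigmaC c i < sigmaC c j := by
  apply Finset.card_lt_card
  rw [Finset.ssubset_iff_of_subset]
  · refine ⟨j, by simp, ?_⟩
    simp only [mem_filter, mem_univ, true_and, not_or, not_and, not_lt]
    exact ⟨by simp [hc], fun _ => not_le.2 hij⟩
  · intro m hm
    simp only [mem_filter, mem_univ, true_and] at hm ⊢
    rcases hm with h1 | ⟨h1, h2⟩
    · exact Or.inl (hc ▸ h1)
    · exact Or.inr ⟨h1.trans hc, h2.trans hij.le⟩

lemma sigmaC_lt_iff {k l : ℕ} {c : Fin k → Fin l} {i j : Fin k} (hij : i < j) :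
    sigmaC c j < sigmaC c i ↔ c j < c i := by
  constructor
  · intro h
    rcases lt_trichotomy (c j) (c i) with h1 | h1 | h1
    · exact h1
    · exact absurd (sigmaC_lt_of_eq h1.symm hij) (by omega)
    · exact absurd (sigmaC_lt_of_lt h1) (by omega)
  · exact sigmaC_lt_of_lt

def invC {k l : ℕ} (c : Fin k → Fin l) : ℕ :=
  (Finset.univ.filter (fun p : Fin k × Fin k => p.1 < p.2 ∧ c p.2 < c p.1)).card

lemma sgnC_eq_inv {k l : ℕ} (c : Fin k → Fin l) : sgnC c = (-1) ^ invC c := by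
  unfold sgnC invC
  congr 2
  apply Finset.filter_congr
  intro p _
  exact and_congr_right fun h => sigmaC_lt_iff h

set_option maxHeartbeats 1000000 in
lemma invC_cons_cons {k l : ℕ} (a b : Fin l) (v : Fin k → Fin l) :
    invC (Fin.cons a (Fin.cons b v) : Fin (k+2) → Fin l)
      = ((if b < a then 1 else 0) + (univ.filter (fun m => v m < a)).card
          + (univ.filter (fun m => v m < b)).card)
        + invC v := by
  unfold invC
  rw [Finset.card_filter, Fintype.sum_prod_type]
  simp only [Fin.sum_univ_succ, Fin.cons_zero, Fin.cons_succ, Fin.succ_pos,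
    Fin.succ_lt_succ_iff, Fin.not_lt_zero, lt_irrefl, false_and, if_false, true_and]
  simp only [Finset.card_filter, Fintype.sum_prod_type, zero_add]
  ring

lemma sgnC_cons_cons {k l : ℕ} (a b : Fin l) (v : Fin k → Fin l) :
    sgnC (Fin.cons a (Fin.cons b v) : Fin (k+2) → Fin l) =
      ((if b < a then (-1:ℤ) else 1)
        * (-1)^((univ.filter (fun m => v m < a)).card)
        * (-1)^((univ.filter (fun m => v m < b)).card)) * sgnC v := by
  rw [sgnC_eq_inv, sgnC_eq_inv (c := v), invC_cons_cons, pow_add, pow_add, pow_add]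
  split_ifs <;> simp

lemma sum_pair {l : ℕ} (g : Fin l → ℤ) (hg : ∀ x, g x * g x = 1) :
    ∑ p : Fin l × Fin l, (if p.2 < p.1 then (-1:ℤ) else 1) * g p.1 * g p.2 = l := by
  rw [← Finset.sum_filter_add_sum_filter_not Finset.univ (fun p : Fin l × Fin l => p.1 = p.2)]
  have h1 : ∑ p ∈ filter (fun p : Fin l × Fin l => p.1 = p.2) univ,
      (if p.2 < p.1 then (-1:ℤ) else 1) * g p.1 * g p.2 = l := by
    have hcard : (filter (fun p : Fin l × Fin l => p.1 = p.2) univ).card = l := by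
      have : (filter (fun p : Fin l × Fin l => p.1 = p.2) univ).card
          = (univ : Finset (Fin l)).card := by
        apply Finset.card_bij (fun p _ => p.1)
        · intros; simp
        · intro p hp q hq h
          simp only [mem_filter, mem_univ, true_and] at hp hq
          exact Prod.ext h (by rw [← hp, ← hq, h])
        · intro i _; exact ⟨(i,i), by simp, rfl⟩
      rw [this, Finset.card_univ, Fintype.card_fin]
    calc ∑ p ∈ filter (fun p : Fin l × Fin l => p.1 = p.2) univ,
        (if p.2 < p.1 then (-1:ℤ) else 1) * g p.1 * g p.2
        = ∑ _p ∈ filter (fun p : Fin l × Fin l => p.1 = p.2) univ, (1:ℤ) := by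
          apply Finset.sum_congr rfl
          intro p hp
          simp only [mem_filter, mem_univ, true_and] at hp
          rw [if_neg (by simp [hp]), one_mul, hp, hg]
      _ = l := by rw [Finset.sum_const, hcard]; simp
  have h2 : ∑ p ∈ filter (fun p : Fin l × Fin l => ¬ p.1 = p.2) univ,
      (if p.2 < p.1 then (-1:ℤ) else 1) * g p.1 * g p.2 = 0 := by
    apply Finset.sum_involution (fun p _ => (p.2, p.1))
    · intro p hp
      simp only [mem_filter, mem_univ, true_and] at hp
      rcases lt_or_gt_of_ne (fun h : p.1 = p.2 => hp h) with h | h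
      · rw [if_neg (not_lt.2 h.le), if_pos h]; ring
      · rw [if_pos h, if_neg (not_lt.2 h.le)]; ring
    · intro p hp _
      simp only [mem_filter, mem_univ, true_and] at hp
      intro hcon
      exact hp (congrArg Prod.fst hcon).symm
    · intro p hp
      simp only [mem_filter, mem_univ, true_and] at hp ⊢
      exact fun h => hp h.symm
    · intro p hp; rfl
  rw [h1, h2, add_zero]

lemma sum_cons_dec {k l : ℕ} (F : (Fin (k+1) → Fin l) → ℤ) :
    ∑ c : Fin (k+1) → Fin l, F c = ∑ a : Fin l, ∑ v : Fin k → Fin l, F (Fin.cons a v) := by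
  have h := Fintype.sum_equiv (Fin.consEquiv (fun _ => Fin l))
    (fun p => F (Fin.cons p.1 p.2)) F (fun p => rfl)
  rw [← h, Fintype.sum_prod_type]

lemma N_step (k l : ℕ) : N (k+2) l = l * N k l := by
  unfold N
  rw [sum_cons_dec (k := k+1) (fun c => sgnC c)]
  rw [Finset.sum_congr rfl (fun a _ => sum_cons_dec (fun c => sgnC (Fin.cons a c)))]
  have key : ∀ v : Fin k → Fin l,
      ∑ a : Fin l, ∑ b : Fin l, sgnC (Fin.cons a (Fin.cons b v) : Fin (k+2) → Fin l)
        = l * sgnC v := by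
    intro v
    have := sum_pair (fun x : Fin l => (-1:ℤ)^((univ.filter (fun m => v m < x)).card))
      (fun x => by rw [← pow_add]; exact Even.neg_one_pow ⟨_, rfl⟩)
    rw [Fintype.sum_prod_type] at this
    calc ∑ a : Fin l, ∑ b : Fin l, sgnC (Fin.cons a (Fin.cons b v) : Fin (k+2) → Fin l)
        = ∑ a : Fin l, ∑ b : Fin l,
            ((if b < a then (-1:ℤ) else 1)
              * (-1)^((univ.filter (fun m => v m < a)).card)
              * (-1)^((univ.filter (fun m => v m < b)).card)) * sgnC v := by
          exact Finset.sum_congr rfl fun a _ => Finset.sum_congr rfl fun b _ =>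
            sgnC_cons_cons a b v
      _ = (∑ a : Fin l, ∑ b : Fin l,
            (if b < a then (-1:ℤ) else 1)
              * (-1)^((univ.filter (fun m => v m < a)).card)
              * (-1)^((univ.filter (fun m => v m < b)).card)) * sgnC v := by
          rw [Finset.sum_mul]
          exact Finset.sum_congr rfl fun a _ => (Finset.sum_mul _ _ _).symm
      _ = (l : ℤ) * sgnC v := by rw [this]
  calc ∑ a : Fin l, ∑ b : Fin l, ∑ v : Fin k → Fin l,
        sgnC (Fin.cons a (Fin.cons b v) : Fin (k+2) → Fin l)
      = ∑ a : Fin l, ∑ v : Fin k → Fin l, ∑ b : Fin l,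
        sgnC (Fin.cons a (Fin.cons b v) : Fin (k+2) → Fin l) := by
        exact Finset.sum_congr rfl fun a _ => Finset.sum_comm
    _ = ∑ v : Fin k → Fin l, ∑ a : Fin l, ∑ b : Fin l,
        sgnC (Fin.cons a (Fin.cons b v) : Fin (k+2) → Fin l) := by
        have : ∀ a : Fin l, ∀ v : Fin k → Fin l, (∑ b : Fin l,
            sgnC (Fin.cons a (Fin.cons b v) : Fin (k+2) → Fin l)) =
            (fun a v => ∑ b : Fin l,
            sgnC (Fin.cons a (Fin.cons b v) : Fin (k+2) → Fin l)) a v := fun _ _ => rfl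
        exact Finset.sum_comm
    _ = ∑ v : Fin k → Fin l, (l : ℤ) * sgnC v := Finset.sum_congr rfl fun v _ => key v
    _ = l * ∑ v : Fin k → Fin l, sgnC v := by rw [Finset.mul_sum]

lemma N_zero (l : ℕ) : N 0 l = 1 := by
  simp [N, sgnC]

lemma N_one (l : ℕ) : N 1 l = l := by
  have h : ∀ c : Fin 1 → Fin l, sgnC c = 1 := by
    intro c
    have : (Finset.univ.filter
        (fun p : Fin 1 × Fin 1 => p.1 < p.2 ∧ sigmaC c p.2 < sigmaC c p.1)) = ∅ := by
      apply Finset.filter_false_of_mem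
      intro p _
      rw [Subsingleton.elim p.1 p.2]
      simp
    rw [sgnC, this]
    simp
  rw [N]
  rw [Finset.sum_congr rfl fun c _ => h c, Finset.sum_const, Finset.card_univ]
  simp

lemma N_pair (j : ℕ) : ∀ l, N (2*j+2) l = N (2*j+1) l := by
  induction j with
  | zero =>
    intro l
    have h2 : N 2 l = l * N 0 l := N_step 0 l
    rw [show 2*0+2 = 2 by ring, show 2*0+1 = 1 by ring, h2, N_zero, N_one, mul_one]
  | succ i ih =>
    intro l
    have e1 : 2*(i+1)+2 = (2*i+2)+2 := by ring
    have e2 : 2*(i+1)+1 = (2*i+1)+2 := by ring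
    rw [e1, e2, N_step (2*i+2), N_step (2*i+1), ih]

lemma N_succ_of_odd (k l : ℕ) (hk : Odd k) : N (k+1) l = N k l := by
  obtain ⟨j, rfl⟩ := hk
  rw [show 2*j+1+1 = 2*j+2 by ring]
  exact N_pair j l

lemma neg_one_zpow_eq_pow (z : ℤ) (m : ℕ) (h : Even (z - m)) : (-1:ℚ) ^ z = (-1:ℚ) ^ m := by
  have h0 : (-1:ℚ) ≠ 0 := by norm_num
  have : (-1:ℚ) ^ z = (-1:ℚ) ^ (z - (m:ℤ)) * (-1:ℚ) ^ ((m:ℕ):ℤ) := by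
    rw [← zpow_add₀ h0]; congr 1; ring
  rw [this, h.neg_one_zpow, one_mul, zpow_natCast]

lemma T_aux (m n a b : ℕ) :
    T m n (2*a+3) (2*b+2)
      = (-1)^m * T m n (2*a+2) (2*b+2) + T m n (2*a+3) (2*b+1) := by
  have e1 : 2*a+3-1 = 2*a+2 := by omega
  have e2 : 2*a+2-1 = 2*a+1 := by omega
  simp only [T, e1, e2]
  push_cast
  have h1 : (-1:ℚ) ^ ((2 * (a:ℤ) + 3 - 1) * ((m:ℤ) - (2 * (a:ℤ) + 3) - (2 * (b:ℤ) + 2))) = 1 := by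
    refine Even.neg_one_zpow (Int.even_mul.2 (Or.inl ⟨(a:ℤ)+1, by ring⟩))
  have h2 : (-1:ℚ) ^ ((2 * (a:ℤ) + 2 - 1) * ((m:ℤ) - (2 * (a:ℤ) + 2) - (2 * (b:ℤ) + 2)))
      = (-1:ℚ) ^ m := by
    refine neg_one_zpow_eq_pow _ m ⟨(a:ℤ)*(m:ℤ) - (2*(a:ℤ)+1)*((a:ℤ)+(b:ℤ)+2), by ring⟩
  have h3 : (-1:ℚ) ^ ((2 * (a:ℤ) + 3 - 1) * ((m:ℤ) - (2 * (a:ℤ) + 3) - (2 * (b:ℤ) + 1))) = 1 := by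
    refine Even.neg_one_zpow (Int.even_mul.2 (Or.inl ⟨(a:ℤ)+1, by ring⟩))
  rw [h1, h2, h3]
  have hNa : ∀ x, N (2*a+1) x = N (2*a+2) x := by
    intro x
    have := N_succ_of_odd (2*a+1) x ⟨a, by ring⟩
    rw [show 2*a+1+1 = 2*a+2 by ring] at this
    exact this.symm
  have hNb : ∀ x, N (2*b+1) x = N (2*b+2) x := by
    intro x
    have := N_succ_of_odd (2*b+1) x ⟨b, by ring⟩
    rw [show 2*b+1+1 = 2*b+2 by ring] at this
    exact this.symm
  have hs2 : ∑ x ∈ Finset.Icc 1 n, (N (2*a+1) (x-1) : ℚ) * (N (2*b+2) (n-x) : ℚ)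
      = ∑ x ∈ Finset.Icc 1 n, (N (2*a+2) (x-1) : ℚ) * (N (2*b+2) (n-x) : ℚ) :=
    Finset.sum_congr rfl fun x _ => by rw [hNa]
  have hs3 : ∑ x ∈ Finset.Icc 1 n, (N (2*a+2) (x-1) : ℚ) * (N (2*b+1) (n-x) : ℚ)
      = ∑ x ∈ Finset.Icc 1 n, (N (2*a+2) (x-1) : ℚ) * (N (2*b+2) (n-x) : ℚ) :=
    Finset.sum_congr rfl fun x _ => by rw [hNb]
  rw [hs2, hs3]
  have y1 : Y (2*a+2) (2*b+2) = ((a+b+2).choose (a+1) : ℤ) := by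
    rw [Y, if_pos (Or.inl ⟨a+1, by ring⟩)]
    rw [show (2*a+2+(2*b+2))/2 = a+b+2 by omega, show (2*a+2)/2 = a+1 by omega]
  have y2 : Y (2*a+1) (2*b+2) = ((a+b+1).choose a : ℤ) := by
    rw [Y, if_pos (Or.inr ⟨b+1, by ring⟩)]
    rw [show (2*a+1+(2*b+2))/2 = a+b+1 by omega, show (2*a+1)/2 = a by omega]
  have y3 : Y (2*a+2) (2*b+1) = ((a+b+1).choose (a+1) : ℤ) := by
    rw [Y, if_pos (Or.inl ⟨a+1, by ring⟩)]
    rw [show (2*a+2+(2*b+1))/2 = a+b+1 by omega, show (2*a+2)/2 = a+1 by omega]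
  have hY : (Y (2*a+2) (2*b+2) : ℚ) = (Y (2*a+1) (2*b+2) : ℚ) + (Y (2*a+2) (2*b+1) : ℚ) := by
    rw [y1, y2, y3, Nat.choose_succ_succ (a+b+1) a]
    push_cast
    ring
  set S : ℚ := ∑ x ∈ Finset.Icc 1 n, (N (2*a+2) (x-1) : ℚ) * (N (2*b+2) (n-x) : ℚ) with hS
  have hmm2 : ((-1:ℚ))^(m*2) = 1 := by
    rw [pow_mul', neg_one_sq, one_pow]
  rw [hY]
  linear_combination (-((1/(n:ℚ)) * (Y (2*a+1) (2*b+2) : ℚ) * S)) * hmm2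


theorem T_recursion_odd_even (m n p q : ℕ) (hn : 1 ≤ n) (hm : 1 ≤ m)
    (hp : Odd p) (hp1 : 1 < p) (hq : Even q) (hq0 : 0 < q) (hpq : p + q ≤ m) :
    T m n p q = (-1) ^ m * T m n (p - 1) q + T m n p (q - 1) := by
  obtain ⟨c, hc⟩ := hp
  obtain ⟨d, hd⟩ := hq
  rw [show p = 2*(c-1)+3 by omega, show q = 2*(d-1)+2 by omega,
    show 2*(c-1)+3-1 = 2*(c-1)+2 by omega, show 2*(d-1)+2-1 = 2*(d-1)+1 by omega]
  exact T_aux m n (c-1) (d-1)
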